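/- Monotonicity of Rényi divergence under conditional dominance: let α > 1, and let (U,V,W) and (U',V',W') be tuples of jointly distributed discrete random variables. If for every u in the support of U, D_α(V|_{U=u} ‖ V'|_{U'=u}) ≤ D_α(W|_{U=u} ‖ W'|_{U'=u}), then D_α((U,V)‖(U',V')) ≤ D_α((U,W)‖(U',W')). -/

import Mathlib

open Finset ENNReal

def IsPMF {Ω : Type*} [Fintype Ω] (p : Ω → ℝ≥0∞) : Prop := ∑ x, p x = 1

/-- Rényi divergence of order `α` on a finite space, with `ℝ≥0∞` conventions. -/
noncomputable def renyiDiv (α : ℝ) {Ω : Type*} [Fintype Ω] (p q : Ω → ℝ≥0∞) : EReal :=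
  ((α - 1)⁻¹ : ℝ) * ENNReal.log (∑ x, p x ^ α * q x ^ (1 - α))

/-!
`D_α(P‖Q)` is an increasing function of `∑ₓ P(x)^α Q(x)^{1-α}`. For joint distributions this
sum factors as `∑ᵤ P_U(u)^α Q_U(u)^{1-α} · ∑ₓ P_{X|u}(x)^α Q_{X|u}(x)^{1-α}`, so the
hypothesis compares the two joint sums term by term; the terms with `P_U(u) = 0` vanish.
-/

noncomputable def renyiSum (α : ℝ) {Ω : Type*} [Fintype Ω] (p q : Ω → ℝ≥0∞) : ℝ≥0∞ :=
  ∑ x, p x ^ α * q x ^ (1 - α)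

theorem EReal.coe_mul_le_coe_mul_iff {c : ℝ} (hc : 0 < c) {x y : EReal} :
    (c : EReal) * x ≤ c * y ↔ x ≤ y := by
  have hc' : (0 : EReal) < c := EReal.coe_pos.2 hc
  rw [← EReal.div_le_iff_le_mul hc' (EReal.coe_ne_top c), mul_comm, ← EReal.mul_div,
    EReal.div_self (EReal.coe_ne_bot c) (EReal.coe_ne_top c) hc'.ne', mul_one]

theorem renyiDiv_le_renyiDiv_iff {Ω Ω' : Type*} [Fintype Ω] [Fintype Ω'] {α : ℝ} (hα : 1 < α)
    (p q : Ω → ℝ≥0∞) (p' q' : Ω' → ℝ≥0∞) :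
    renyiDiv α p q ≤ renyiDiv α p' q' ↔ renyiSum α p q ≤ renyiSum α p' q' := by
  rw [renyiDiv, renyiDiv, EReal.coe_mul_le_coe_mul_iff (inv_pos.2 (sub_pos.2 hα)),
    ENNReal.log_le_log_iff, renyiSum, renyiSum]

theorem IsPMF.ne_top {Ω : Type*} [Fintype Ω] {p : Ω → ℝ≥0∞} (hp : IsPMF p) (x : Ω) :
    p x ≠ ⊤ :=
  ne_top_of_le_ne_top one_ne_top (hp ▸ single_le_sum (fun _ _ => zero_le) (mem_univ x))

theorem renyiSum_prod {𝒰 𝒳 : Type*} [Fintype 𝒰] [Fintype 𝒳] {α : ℝ} (hα : 0 ≤ α)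
    (pU qU : 𝒰 → ℝ≥0∞) (hqU : ∀ u, qU u ≠ ⊤)
    (pX qX : 𝒰 → 𝒳 → ℝ≥0∞) (hqX : ∀ u x, qX u x ≠ ⊤) :
    renyiSum α (fun p : 𝒰 × 𝒳 => pU p.1 * pX p.1 p.2) (fun p => qU p.1 * qX p.1 p.2) =
      ∑ u, pU u ^ α * qU u ^ (1 - α) * renyiSum α (pX u) (qX u) := by
  rw [renyiSum, Fintype.sum_prod_type]
  refine sum_congr rfl fun u _ => ?_
  rw [renyiSum, mul_sum]
  refine sum_congr rfl fun x _ => ?_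
  -- `(a * b) ^ (1 - α)` need not split when `a = 0`, `b = ⊤`: hence the finiteness of `qU`, `qX`
  rw [ENNReal.mul_rpow_of_nonneg _ _ hα, ENNReal.mul_rpow_of_ne_top (hqU u) (hqX u x)]
  ring

theorem renyiDiv_monotone_conditional_general {𝒰 𝒱 𝒲 : Type*} [Fintype 𝒰] [Fintype 𝒱] [Fintype 𝒲]
    (α : ℝ) (hα : 1 < α)
    (pU pU' : 𝒰 → ℝ≥0∞) (hU' : IsPMF pU')
    (pV pV' : 𝒰 → 𝒱 → ℝ≥0∞) (hV' : ∀ u, IsPMF (pV' u))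
    (pW pW' : 𝒰 → 𝒲 → ℝ≥0∞) (hW' : ∀ u, IsPMF (pW' u))
    (hcond : ∀ u, pU u ≠ 0 → renyiDiv α (pV u) (pV' u) ≤ renyiDiv α (pW u) (pW' u)) :
    renyiDiv α (fun p : 𝒰 × 𝒱 => pU p.1 * pV p.1 p.2)
               (fun p : 𝒰 × 𝒱 => pU' p.1 * pV' p.1 p.2) ≤
    renyiDiv α (fun p : 𝒰 × 𝒲 => pU p.1 * pW p.1 p.2)
               (fun p : 𝒰 × 𝒲 => pU' p.1 * pW' p.1 p.2) := by
  rw [renyiDiv_le_renyiDiv_iff hα,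
    renyiSum_prod (by linarith) pU pU' hU'.ne_top pV pV' fun u => (hV' u).ne_top,
    renyiSum_prod (by linarith) pU pU' hU'.ne_top pW pW' fun u => (hW' u).ne_top]
  refine sum_le_sum fun u _ => ?_
  by_cases hu : pU u = 0
  · simp [hu, ENNReal.zero_rpow_of_pos (by linarith : (0 : ℝ) < α)]
  · exact mul_le_mul_right ((renyiDiv_le_renyiDiv_iff hα _ _ _ _).1 (hcond u hu)) _

/-- Monotonicity of Rényi divergence under conditional dominance: if for every `u`
in the support of `U` we have `D_α(V|_{U=u} ‖ V'|_{U'=u}) ≤ D_α(W|_{U=u} ‖ W'|_{U'=u})`,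
then `D_α((U,V)‖(U',V')) ≤ D_α((U,W)‖(U',W'))`. -/
theorem renyiDiv_monotone_conditional {𝒰 𝒱 𝒲 : Type*} [Fintype 𝒰] [Fintype 𝒱] [Fintype 𝒲]
    (α : ℝ) (hα : 1 < α)
    (pU pU' : 𝒰 → ℝ≥0∞) (hU : IsPMF pU) (hU' : IsPMF pU')
    (pV pV' : 𝒰 → 𝒱 → ℝ≥0∞) (hV : ∀ u, IsPMF (pV u)) (hV' : ∀ u, IsPMF (pV' u))
    (pW pW' : 𝒰 → 𝒲 → ℝ≥0∞) (hW : ∀ u, IsPMF (pW u)) (hW' : ∀ u, IsPMF (pW' u))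
    (hcond : ∀ u, pU u ≠ 0 → renyiDiv α (pV u) (pV' u) ≤ renyiDiv α (pW u) (pW' u)) :
    renyiDiv α (fun p : 𝒰 × 𝒱 => pU p.1 * pV p.1 p.2)
               (fun p : 𝒰 × 𝒱 => pU' p.1 * pV' p.1 p.2) ≤
    renyiDiv α (fun p : 𝒰 × 𝒲 => pU p.1 * pW p.1 p.2)
               (fun p : 𝒰 × 𝒲 => pU' p.1 * pW' p.1 p.2) :=
  renyiDiv_monotone_conditional_general α hα pU pU' hU' pV pV' hV' pW pW' hW' hcond
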